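/- For all n ≥ 0: F_{3n}(1, -1/q, q) = 0, F_{3n+1}(1, -1/q, q) = (-1)^n q^{n(3n-1)/2}, and F_{3n+2}(1, -1/q, q) = (-1)^n q^{n(3n+1)/2}. -/

import Mathlib

open Finset

noncomputable section

abbrev K : Type := RatFunc ℚ

def q : K := RatFunc.X

def qint (a : K) (m : ℕ) : K := ∑ i ∈ range m, a ^ i

def qfact (a : K) (m : ℕ) : K := ∏ i ∈ range m, qint a (i + 1)

def qbinom (a : K) (n k : ℕ) : K :=
  if k ≤ n then qfact a n / (qfact a k * qfact a (n - k)) else 0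

/-- q-Fibonacci polynomials F_n(x,s,q) with base `a`. -/
def qF (a x s : K) : ℕ → K
  | 0 => 0
  | n + 1 => ∑ k ∈ range (n / 2 + 1),
      a ^ (k * (k + 1) / 2) * qbinom a (n - k) k * s ^ k * x ^ (n - 2 * k)

/-- q-Lucas polynomials L_n(x,s,q) with base `a` (L_0 = 2). -/
def qL (a x s : K) (n : ℕ) : K :=
  if n = 0 then 2 else
  ∑ k ∈ range (n / 2 + 1),
    a ^ (k * (k - 1) / 2) * (qint a n / qint a (n - k)) * qbinom a (n - k) k
      * s ^ k * x ^ (n - 2 * k)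

/-- Starred variant: L*_0 = 1, L*_n = L_n for n > 0. -/
def qLs (a x s : K) (n : ℕ) : K := if n = 0 then 1 else qL a x s n

/-- Rogers-Szegő polynomial. -/
def rs (a x y : K) (m : ℕ) : K := ∑ j ∈ range (m + 1), qbinom a m j * x ^ j * y ^ (m - j)

/-- q-Pochhammer (q;q)_m. -/
def qpoch (a : K) (m : ℕ) : K := ∏ j ∈ range m, (1 - a ^ (j + 1))

/-!
Write `f n = F_n(1, -1/q)`. The two q-Pascal rules for the q-binomial coefficients give two
three-term recurrences for `F_n(x, s)`, one relating `s` to `s / q` and one relating `s` to `q s`.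
Eliminating `F_n(1, -1/q²)` between them gives the four-term recurrence
`f (m + 4) = f (m + 3) - q ^ (m + 1) * f (m + 1) + q ^ m * f m`,
which the closed forms satisfy; passing from `n` to `n + 1` shifts the exponents by the differences
of consecutive generalized pentagonal numbers.
-/

section QBinomial

variable {a : K}

lemma qint_zero (a : K) : qint a 0 = 0 := sum_range_zero _

lemma qint_add (a : K) (m n : ℕ) : qint a (m + n) = qint a m + a ^ m * qint a n := by
  simp [qint, sum_range_add, mul_sum, pow_add]

lemma qfact_zero (a : K) : qfact a 0 = 1 := prod_range_zero _

lemma qfact_succ (a : K) (m : ℕ) : qfact a (m + 1) = qfact a m * qint a (m + 1) :=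
  prod_range_succ _ _

lemma qbinom_of_lt {n k : ℕ} (h : n < k) : qbinom a n k = 0 := if_neg (not_le.mpr h)

variable (ha : ∀ m, qint a (m + 1) ≠ 0)
include ha

lemma qfact_ne_zero (m : ℕ) : qfact a m ≠ 0 :=
  prod_ne_zero_iff.mpr fun i _ => ha i

lemma qbinom_zero_right (n : ℕ) : qbinom a n 0 = 1 := by
  rw [qbinom, if_pos n.zero_le, qfact_zero, one_mul, Nat.sub_zero, div_self (qfact_ne_zero ha n)]

lemma qbinom_succ_right_eq (n k : ℕ) :
    qbinom a n (k + 1) * qint a (k + 1) = qint a (n - k) * qbinom a n k := by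
  rcases le_or_gt n k with hnk | hkn
  · rw [qbinom_of_lt (by omega), Nat.sub_eq_zero_of_le hnk, qint_zero, zero_mul, zero_mul]
  · obtain ⟨j, rfl⟩ := Nat.exists_eq_add_of_lt hkn
    have hk := qfact_ne_zero ha k
    have hj := qfact_ne_zero ha j
    rw [qbinom, if_pos (by omega), qbinom, if_pos (by omega),
      show k + j + 1 - (k + 1) = j by omega, show k + j + 1 - k = j + 1 by omega,
      qfact_succ a k, qfact_succ a j]
    field_simp [ha k, ha j]

lemma qint_succ_mul_qbinom_eq (n k : ℕ) :
    qbinom a (n + 1) (k + 1) * qint a (k + 1) = qint a (n + 1) * qbinom a n k := by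
  rcases lt_or_ge n k with hnk | hkn
  · rw [qbinom_of_lt (by omega), qbinom_of_lt hnk, zero_mul, mul_zero]
  · obtain ⟨j, rfl⟩ := Nat.exists_eq_add_of_le hkn
    have hk := qfact_ne_zero ha k
    have hj := qfact_ne_zero ha j
    rw [qbinom, if_pos (by omega), qbinom, if_pos (by omega),
      show k + j + 1 - (k + 1) = j by omega, show k + j - k = j by omega,
      qfact_succ a (k + j), qfact_succ a k]
    field_simp [ha k]

lemma qbinom_succ_succ (n k : ℕ) :
    qbinom a (n + 1) (k + 1) = qbinom a n (k + 1) + a ^ (n - k) * qbinom a n k := by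
  rcases lt_or_ge n k with hnk | hkn
  · simp [qbinom_of_lt hnk, qbinom_of_lt (show n < k + 1 by omega),
      qbinom_of_lt (show n + 1 < k + 1 by omega)]
  · have hsplit : qint a (n + 1) = qint a (n - k) + a ^ (n - k) * qint a (k + 1) := by
      rw [← qint_add, show n - k + (k + 1) = n + 1 by omega]
    refine mul_right_cancel₀ (ha k) ?_
    linear_combination qint_succ_mul_qbinom_eq ha n k - qbinom_succ_right_eq ha n k
      + qbinom a n k * hsplit

lemma qbinom_succ_succ' (n k : ℕ) :
    qbinom a (n + 1) (k + 1) = a ^ (k + 1) * qbinom a n (k + 1) + qbinom a n k := by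
  rcases lt_or_ge n k with hnk | hkn
  · simp [qbinom_of_lt hnk, qbinom_of_lt (show n < k + 1 by omega),
      qbinom_of_lt (show n + 1 < k + 1 by omega)]
  · have hsplit : qint a (n + 1) = qint a (k + 1) + a ^ (k + 1) * qint a (n - k) := by
      rw [← qint_add, show k + 1 + (n - k) = n + 1 by omega]
    refine mul_right_cancel₀ (ha k) ?_
    linear_combination qint_succ_mul_qbinom_eq ha n k - a ^ (k + 1) * qbinom_succ_right_eq ha n k
      + qbinom a n k * hsplit

end QBinomial

lemma add_one_mul_add_two_div_two (k : ℕ) :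
    (k + 1) * (k + 1 + 1) / 2 = k * (k + 1) / 2 + (k + 1) := by
  simpa [Nat.mul_comm] using Nat.triangle_succ (k + 1)

def qFCoeff (a s : K) (n k : ℕ) : K := a ^ (k * (k + 1) / 2) * qbinom a (n - k) k * s ^ k

section QFibonacci

variable {a : K}

lemma qF_zero (x s : K) : qF a x s 0 = 0 := rfl

lemma qF_one (x s : K) : qF a x s 1 = 1 := by
  simp [qF, qbinom, qfact_zero]

lemma qF_two (x s : K) : qF a x s 2 = x := by
  simp [qF, qbinom, qfact, qint]

lemma qFCoeff_of_lt {s : K} {n k : ℕ} (h : n < 2 * k) : qFCoeff a s n k = 0 := by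
  rw [qFCoeff, qbinom_of_lt (by omega), mul_zero, zero_mul]

lemma qF_succ_eq_sum (x s : K) {n N : ℕ} (hN : n / 2 < N) :
    qF a x s (n + 1) = ∑ k ∈ range N, qFCoeff a s n k * x ^ (n - 2 * k) :=
  sum_subset (range_subset_range.mpr hN) fun k _ hk => by
    change qFCoeff a s n k * _ = 0
    rw [qFCoeff_of_lt (by simp at hk; omega), zero_mul]

lemma qF_add_three_of_coeff (ha : ∀ m, qint a (m + 1) ≠ 0) {x s s' s'' c : K} {m : ℕ}
    (h : ∀ k, 2 * k ≤ m →
      qFCoeff a s (m + 2) (k + 1) = qFCoeff a s' (m + 1) (k + 1) + c * qFCoeff a s'' m k) :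
    qF a x s (m + 3) = x * qF a x s' (m + 2) + c * qF a x s'' (m + 1) := by
  have coeff_zero : ∀ s n, qFCoeff a s n 0 = 1 := fun s n => by
    simp [qFCoeff, qbinom_zero_right ha]
  rw [qF_succ_eq_sum x s (N := m / 2 + 2) (by omega),
    qF_succ_eq_sum x s' (N := m / 2 + 2) (by omega),
    qF_succ_eq_sum x s'' (N := m / 2 + 1) (by omega),
    sum_range_succ' _ (m / 2 + 1), sum_range_succ' _ (m / 2 + 1), mul_add, mul_sum, mul_sum,
    coeff_zero, coeff_zero, add_right_comm, ← sum_add_distrib]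
  congr 1
  · refine sum_congr rfl fun k hk => ?_
    have hk : 2 * k ≤ m := by simp at hk; omega
    rw [h k hk]
    -- at `2 * k = m` the exponent `m + 1 - 2 * (k + 1)` truncates, but its coefficient vanishes
    rcases hk.lt_or_eq with hlt | rfl
    · obtain ⟨j, rfl⟩ := Nat.exists_eq_add_of_lt hlt
      rw [show 2 * k + j + 1 + 2 - 2 * (k + 1) = j + 1 by omega,
        show 2 * k + j + 1 + 1 - 2 * (k + 1) = j by omega,
        show 2 * k + j + 1 - 2 * k = j + 1 by omega]
      ring
    · rw [qFCoeff_of_lt (show 2 * k + 1 < 2 * (k + 1) by omega),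
        show 2 * k + 2 - 2 * (k + 1) = 0 by omega, Nat.sub_self]
      ring
  · simp only [Nat.mul_zero, Nat.sub_zero]
    ring

lemma qFCoeff_succ_succ (ha : ∀ m, qint a (m + 1) ≠ 0) (ha₀ : a ≠ 0) (s : K) {m k : ℕ}
    (hk : 2 * k ≤ m) :
    qFCoeff a s (m + 2) (k + 1) =
      qFCoeff a s (m + 1) (k + 1) + a ^ (m + 1) * s * qFCoeff a (s / a) m k := by
  rw [qFCoeff, qFCoeff, qFCoeff, show m + 2 - (k + 1) = m - k + 1 by omega,
    show m + 1 - (k + 1) = m - k by omega, qbinom_succ_succ ha, add_one_mul_add_two_div_two,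
    show m + 1 = (m - k - k) + (k + 1) + k by omega, div_pow]
  field_simp [pow_ne_zero k ha₀]
  ring

lemma qFCoeff_succ_succ' (ha : ∀ m, qint a (m + 1) ≠ 0) (s : K) {m k : ℕ} (hk : 2 * k ≤ m) :
    qFCoeff a s (m + 2) (k + 1) =
      qFCoeff a (a * s) (m + 1) (k + 1) + a * s * qFCoeff a (a * s) m k := by
  rw [qFCoeff, qFCoeff, qFCoeff, show m + 2 - (k + 1) = m - k + 1 by omega,
    show m + 1 - (k + 1) = m - k by omega, qbinom_succ_succ' ha, add_one_mul_add_two_div_two]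
  ring

lemma qF_add_three (ha : ∀ m, qint a (m + 1) ≠ 0) (ha₀ : a ≠ 0) (x s : K) (m : ℕ) :
    qF a x s (m + 3) = x * qF a x s (m + 2) + a ^ (m + 1) * s * qF a x (s / a) (m + 1) :=
  qF_add_three_of_coeff ha fun _ hk => qFCoeff_succ_succ ha ha₀ s hk

lemma qF_add_two (ha : ∀ m, qint a (m + 1) ≠ 0) (x s : K) (n : ℕ) :
    qF a x s (n + 2) = x * qF a x (a * s) (n + 1) + a * s * qF a x (a * s) n := by
  cases n with
  | zero => simp [qF_zero, qF_one, qF_two]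
  | succ m => exact qF_add_three_of_coeff ha fun _ hk => qFCoeff_succ_succ' ha s hk

end QFibonacci

lemma q_ne_zero : q ≠ 0 := RatFunc.X_ne_zero

lemma qint_q_succ_ne_zero (m : ℕ) : qint q (m + 1) ≠ 0 := by
  have h : qint q (m + 1) =
      algebraMap (Polynomial ℚ) K (∑ i ∈ range (m + 1), Polynomial.X ^ i) := by
    simp [qint, q, RatFunc.algebraMap_X]
  rw [h, Ne, FaithfulSMul.algebraMap_eq_zero_iff]
  intro h0
  exact m.cast_add_one_ne_zero (by simpa using congrArg (Polynomial.eval 1) h0)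

lemma qF_q_one_neg_inv_add_four (m : ℕ) :
    qF q 1 (-1 / q) (m + 4) =
      qF q 1 (-1 / q) (m + 3) - q ^ (m + 1) * qF q 1 (-1 / q) (m + 1)
        + q ^ m * qF q 1 (-1 / q) m := by
  have hq := q_ne_zero
  have h₁ := qF_add_three qint_q_succ_ne_zero hq 1 (-1 / q) (m + 1)
  have h₂ := qF_add_two qint_q_succ_ne_zero 1 (-1 / q / q) m
  rw [show q * (-1 / q / q) = -1 / q by field_simp] at h₂
  rw [h₁, h₂, pow_succ, pow_succ]
  field_simp
  ring

lemma pentagonal_succ (n : ℕ) :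
    (n + 1) * (3 * (n + 1) - 1) / 2 = n * (3 * n - 1) / 2 + (3 * n + 1) := by
  have : (n + 1) * (3 * (n + 1) - 1) = n * (3 * n - 1) + (6 * n + 2) := by
    cases n with
    | zero => rfl
    | succ k =>
      rw [show 3 * (k + 1 + 1) - 1 = 3 * k + 5 by omega,
        show 3 * (k + 1) - 1 = 3 * k + 2 by omega]
      ring
  omega

lemma pentagonal_succ' (n : ℕ) :
    (n + 1) * (3 * (n + 1) + 1) / 2 = n * (3 * n + 1) / 2 + (3 * n + 2) := by
  have : (n + 1) * (3 * (n + 1) + 1) = n * (3 * n + 1) + (6 * n + 4) := by ring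
  omega

lemma qF_q_one_neg_inv_three_mul (n : ℕ) :
    qF q 1 (-1 / q) (3 * n) = 0 ∧
    qF q 1 (-1 / q) (3 * n + 1) = (-1 : K) ^ n * q ^ (n * (3 * n - 1) / 2) ∧
    qF q 1 (-1 / q) (3 * n + 2) = (-1 : K) ^ n * q ^ (n * (3 * n + 1) / 2) ∧
    qF q 1 (-1 / q) (3 * n + 3) = 0 := by
  induction n with
  | zero =>
    have hq := q_ne_zero
    simp [qF_zero, qF_one, qF_two, qF_add_three qint_q_succ_ne_zero hq]
    field_simp
    ring
  | succ n ih =>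
    obtain ⟨h₀, h₁, h₂, h₃⟩ := ih
    have h₄ : qF q 1 (-1 / q) (3 * n + 4) =
        (-1 : K) ^ (n + 1) * q ^ ((n + 1) * (3 * (n + 1) - 1) / 2) := by
      rw [qF_q_one_neg_inv_add_four, h₃, h₁, h₀, pentagonal_succ, pow_add]
      ring
    have h₅ : qF q 1 (-1 / q) (3 * n + 5) =
        (-1 : K) ^ (n + 1) * q ^ ((n + 1) * (3 * (n + 1) + 1) / 2) := by
      rw [qF_q_one_neg_inv_add_four (3 * n + 1), h₄, h₂, h₁, pentagonal_succ,
        pentagonal_succ', pow_add, pow_add]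
      ring
    have h₆ : qF q 1 (-1 / q) (3 * n + 6) = 0 := by
      rw [qF_q_one_neg_inv_add_four (3 * n + 2), h₅, h₃, h₂, pentagonal_succ', pow_add]
      ring
    exact ⟨h₃, h₄, h₅, h₆⟩

theorem stmt15 (n : ℕ) :
    qF q 1 (-1 / q) (3 * n) = 0 ∧
    qF q 1 (-1 / q) (3 * n + 1) = (-1 : K) ^ n * q ^ (n * (3 * n - 1) / 2) ∧
    qF q 1 (-1 / q) (3 * n + 2) = (-1 : K) ^ n * q ^ (n * (3 * n + 1) / 2) :=
  (qF_q_one_neg_inv_three_mul n).imp_right fun h => ⟨h.1, h.2.1⟩
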